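/- (Lemma 2.2) Let n ≥ 1, γ ∈ ℝ, let U ⊆ ℝⁿ be open, and let v : ℝⁿ → ℝ be three times continuously differentiable and strictly positive on U. Then at every point of U: 2·v^γ·S₂(D²v) = div( (γ/2)·v^{γ−1}·|Dv|²·Dv + v^γ·S²_{ij}(D²v)·∂_i v ) − (3/2)·γ·v^{γ−1}·|Dv|²·Δv − (γ(γ−1)/2)·v^{γ−2}·|Dv|⁴, where the j-th component of the vector field inside the divergence is (γ/2)·v^{γ−1}·|Dv|²·v_j + v^γ·∑_i S²_{ij}(D²v)·v_i. -/

import Mathlib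

/-- Partial derivative `∂_i f` of a function on `ℝⁿ`. -/
noncomputable def pd {n : ℕ} (i : Fin n) (f : (Fin n → ℝ) → ℝ) (x : Fin n → ℝ) : ℝ :=
  fderiv ℝ f x (Pi.single i 1)

/-- Laplacian `Δf = ∑ᵢ ∂ᵢᵢ f`. -/
noncomputable def lap {n : ℕ} (f : (Fin n → ℝ) → ℝ) (x : Fin n → ℝ) : ℝ :=
  ∑ i, pd i (pd i f) x

/-- `S²_{ij}(D²v) = (Δv)·δ_{ij} − ∂_{ij}v`. -/
noncomputable def S2ij {n : ℕ} (v : (Fin n → ℝ) → ℝ) (i j : Fin n) (x : Fin n → ℝ) : ℝ :=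
  lap v x * (if i = j then 1 else 0) - pd j (pd i v) x

/-- `S₂(D²v) = ((Δv)² − ∑_{i,j} v_{ij}²)/2`. -/
noncomputable def S2H {n : ℕ} (v : (Fin n → ℝ) → ℝ) (x : Fin n → ℝ) : ℝ :=
  ((lap v x) ^ 2 - ∑ i, ∑ j, (pd j (pd i v) x) ^ 2) / 2

/-- `|Df|² = ∑ᵢ (∂ᵢf)²`. -/
noncomputable def gradSq {n : ℕ} (f : (Fin n → ℝ) → ℝ) (x : Fin n → ℝ) : ℝ :=
  ∑ i, (pd i f x) ^ 2

/-!
Write the vector field as `f • Dv + v^γ • S²(D²v) Dv` with `f = (γ/2) v^{γ-1} |Dv|²`.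
The Newton tensor `S²(D²v)` is divergence free (this is where the symmetry of the third
derivatives enters) and `S²_{ij}(D²v) v_{ij} = 2 S₂(D²v)`, so
`div(v^γ S²(D²v) Dv) = 2 v^γ S₂(D²v) + γ v^{γ-1} (Δv |Dv|² - v_i v_j v_{ij})`, while
`div(f Dv) = (γ(γ-1)/2) v^{γ-2} |Dv|⁴ + γ v^{γ-1} v_i v_j v_{ij} + (γ/2) v^{γ-1} |Dv|² Δv`.
The cubic terms `v_i v_j v_{ij}` cancel in the sum.
-/

open Topology Finset

section Calculus

variable {n : ℕ} {f g : (Fin n → ℝ) → ℝ} {x : Fin n → ℝ} {j : Fin n}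

lemma ContDiffAt.contDiffAt_pd {m k : WithTop ℕ∞} (hf : ContDiffAt ℝ k f x) (hmk : m + 1 ≤ k)
    (i : Fin n) :
    ContDiffAt ℝ m (pd i f) x :=
  (hf.fderiv_right hmk).clm_apply contDiffAt_const

lemma pd_add (hf : DifferentiableAt ℝ f x) (hg : DifferentiableAt ℝ g x) :
    pd j (fun y => f y + g y) x = pd j f x + pd j g x := by
  simp [pd, fderiv_fun_add hf hg]

lemma pd_sub (hf : DifferentiableAt ℝ f x) (hg : DifferentiableAt ℝ g x) :
    pd j (fun y => f y - g y) x = pd j f x - pd j g x := by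
  simp [pd, fderiv_fun_sub hf hg]

lemma pd_mul (hf : DifferentiableAt ℝ f x) (hg : DifferentiableAt ℝ g x) :
    pd j (fun y => f y * g y) x = pd j f x * g x + f x * pd j g x := by
  simp only [pd, fderiv_fun_mul hf hg, add_apply, smul_apply, smul_eq_mul]
  ring

lemma pd_const_mul (hf : DifferentiableAt ℝ f x) (c : ℝ) :
    pd j (fun y => c * f y) x = c * pd j f x := by
  simp [pd, fderiv_const_mul hf c]

lemma pd_mul_const (hf : DifferentiableAt ℝ f x) (c : ℝ) :
    pd j (fun y => f y * c) x = pd j f x * c := by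
  rw [pd, pd, fderiv_mul_const hf c]
  simp [mul_comm]

lemma pd_sum {ι : Type*} (s : Finset ι) (F : ι → (Fin n → ℝ) → ℝ)
    (hF : ∀ i ∈ s, DifferentiableAt ℝ (F i) x) :
    pd j (fun y => ∑ i ∈ s, F i y) x = ∑ i ∈ s, pd j (F i) x := by
  simp [pd, fderiv_fun_sum hF]

lemma pd_rpow {p : ℝ} (hf : DifferentiableAt ℝ f x) (hfx : f x ≠ 0) :
    pd j (fun y => f y ^ p) x = p * f x ^ (p - 1) * pd j f x := by
  simp [pd, (hf.hasFDerivAt.rpow_const (Or.inl hfx)).fderiv, mul_assoc]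

lemma pd_congr_of_eventuallyEq (h : f =ᶠ[𝓝 x] g) : pd j f x = pd j g x := by
  simp [pd, h.fderiv_eq]

lemma sum_pd_add {X Y : Fin n → (Fin n → ℝ) → ℝ} (hX : ∀ j, DifferentiableAt ℝ (X j) x)
    (hY : ∀ j, DifferentiableAt ℝ (Y j) x) :
    ∑ j, pd j (fun y => X j y + Y j y) x = ∑ j, pd j (X j) x + ∑ j, pd j (Y j) x := by
  simp only [pd_add (hX _) (hY _), sum_add_distrib]

lemma sum_pd_mul {X : Fin n → (Fin n → ℝ) → ℝ} (hf : DifferentiableAt ℝ f x)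
    (hX : ∀ j, DifferentiableAt ℝ (X j) x) :
    ∑ j, pd j (fun y => f y * X j y) x = ∑ j, pd j f x * X j x + f x * ∑ j, pd j (X j) x := by
  simp only [pd_mul hf (hX _), sum_add_distrib, mul_sum]

end Calculus

section Symmetry

variable {n : ℕ} {f : (Fin n → ℝ) → ℝ} {x : Fin n → ℝ}

lemma pd_pd_eq_fderiv_fderiv (hf : ContDiffAt ℝ 2 f x) (a b : Fin n) :
    pd a (pd b f) x = fderiv ℝ (fderiv ℝ f) x (Pi.single a 1) (Pi.single b 1) := by
  have hdf : DifferentiableAt ℝ (fderiv ℝ f) x :=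
    (hf.fderiv_right (m := 1) le_rfl).differentiableAt one_ne_zero
  change fderiv ℝ (fun y => fderiv ℝ f y (Pi.single b 1)) x (Pi.single a 1) = _
  simp [fderiv_clm_apply hdf (differentiableAt_const _)]

lemma pd_pd_comm (hf : ContDiffAt ℝ 2 f x) (a b : Fin n) :
    pd a (pd b f) x = pd b (pd a f) x := by
  rw [pd_pd_eq_fderiv_fderiv hf, pd_pd_eq_fderiv_fderiv hf]
  exact hf.isSymmSndFDerivAt (by simp [minSmoothness_of_isRCLikeNormedField]) _ _

lemma pd_pd_pd_rotate (hf : ContDiffAt ℝ 3 f x) (a b c : Fin n) :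
    pd a (pd b (pd c f)) x = pd b (pd c (pd a f)) x := by
  have hcomm : pd a (pd c f) =ᶠ[𝓝 x] pd c (pd a f) :=
    (hf.eventually (by simp)).mono fun y hy => pd_pd_comm (hy.of_le (by norm_num)) a c
  rw [pd_pd_comm (hf.contDiffAt_pd (m := 2) le_rfl c) a b, pd_congr_of_eventuallyEq hcomm]

end Symmetry

section Hessian

variable {n : ℕ} {v : (Fin n → ℝ) → ℝ} {x : Fin n → ℝ}

lemma ContDiffAt.differentiableAt_pd (hv : ContDiffAt ℝ 2 v x) (i : Fin n) :
    DifferentiableAt ℝ (pd i v) x :=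
  (hv.contDiffAt_pd (m := 1) le_rfl i).differentiableAt one_ne_zero

lemma ContDiffAt.differentiableAt_pd_pd (hv : ContDiffAt ℝ 3 v x) (a b : Fin n) :
    DifferentiableAt ℝ (pd a (pd b v)) x :=
  (hv.contDiffAt_pd (m := 2) le_rfl b).differentiableAt_pd a

lemma ContDiffAt.differentiableAt_gradSq (hv : ContDiffAt ℝ 2 v x) :
    DifferentiableAt ℝ (gradSq v) x :=
  DifferentiableAt.fun_sum fun i _ => (hv.differentiableAt_pd i).pow 2

lemma ContDiffAt.differentiableAt_lap (hv : ContDiffAt ℝ 3 v x) :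
    DifferentiableAt ℝ (lap v) x :=
  DifferentiableAt.fun_sum fun k _ => hv.differentiableAt_pd_pd k k

lemma ContDiffAt.differentiableAt_S2ij (hv : ContDiffAt ℝ 3 v x) (i j : Fin n) :
    DifferentiableAt ℝ (S2ij v i j) x :=
  (hv.differentiableAt_lap.mul_const _).sub (hv.differentiableAt_pd_pd j i)

lemma ContDiffAt.differentiableAt_sum_S2ij_mul_pd (hv : ContDiffAt ℝ 3 v x) (j : Fin n) :
    DifferentiableAt ℝ (fun y => ∑ i, S2ij v i j y * pd i v y) x :=
  DifferentiableAt.fun_sum fun i _ =>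
    (hv.differentiableAt_S2ij i j).mul ((hv.of_le (by norm_num)).differentiableAt_pd i)

lemma pd_gradSq (hv : ContDiffAt ℝ 2 v x) (j : Fin n) :
    pd j (gradSq v) x = 2 * ∑ i, pd i v x * pd j (pd i v) x := by
  have hd := hv.differentiableAt_pd
  change pd j (fun y => ∑ i, pd i v y ^ 2) x = _
  rw [pd_sum univ (fun i y => pd i v y ^ 2) fun i _ => (hd i).pow 2, mul_sum]
  exact sum_congr rfl fun i _ => by simp only [sq, pd_mul (hd i) (hd i)]; ring

lemma sum_pd_mul_pd_eq_gradSq (v : (Fin n → ℝ) → ℝ) (x : Fin n → ℝ) :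
    ∑ j, pd j v x * pd j v x = gradSq v x :=
  sum_congr rfl fun _ _ => (sq _).symm

lemma sum_S2ij_mul_pd (v : (Fin n → ℝ) → ℝ) (j : Fin n) (x : Fin n → ℝ) :
    ∑ i, S2ij v i j x * pd i v x = lap v x * pd j v x - ∑ i, pd i v x * pd j (pd i v) x := by
  simp only [S2ij, sub_mul, sum_sub_distrib, mul_ite, ite_mul, mul_one, mul_zero, zero_mul,
    sum_ite_eq', mem_univ, if_true]
  exact congrArg _ (sum_congr rfl fun i _ => mul_comm _ _)

lemma sum_sum_S2ij_mul_pd_pd (v : (Fin n → ℝ) → ℝ) (x : Fin n → ℝ) :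
    ∑ i, ∑ j, S2ij v i j x * pd j (pd i v) x = 2 * S2H v x := by
  simp only [S2ij, lap, mul_ite, mul_one, mul_zero, sub_mul, ite_mul, zero_mul, sum_sub_distrib,
    sum_ite_eq, mem_univ, if_true, ← mul_sum, S2H, sq]
  ring

lemma sum_pd_S2ij_eq_zero (hv : ContDiffAt ℝ 3 v x) (i : Fin n) :
    ∑ j, pd j (S2ij v i j) x = 0 := by
  have hd := hv.differentiableAt_pd_pd
  have hlap := hv.differentiableAt_lap
  have hpd_lap : pd i (lap v) x = ∑ k, pd k (pd k (pd i v)) x := by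
    change pd i (fun y => ∑ k, pd k (pd k v) y) x = _
    rw [pd_sum _ _ fun k _ => hd k k]
    exact sum_congr rfl fun k _ => pd_pd_pd_rotate hv i k k
  have hpd_S2ij : ∀ j, pd j (S2ij v i j) x
      = pd j (lap v) x * (if i = j then 1 else 0) - pd j (pd j (pd i v)) x := fun j => by
    change pd j (fun y => lap v y * (if i = j then 1 else 0) - pd j (pd i v) y) x = _
    rw [pd_sub (hlap.mul_const _) (hd _ _), pd_mul_const hlap]
  simp only [hpd_S2ij, sum_sub_distrib, mul_ite, mul_one, mul_zero, sum_ite_eq, mem_univ, if_true,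
    hpd_lap, sub_self]

lemma sum_pd_sum_S2ij_mul_pd (hv : ContDiffAt ℝ 3 v x) :
    ∑ j, pd j (fun y => ∑ i, S2ij v i j y * pd i v y) x = 2 * S2H v x := by
  have hd := (hv.of_le (by norm_num)).differentiableAt_pd
  calc ∑ j, pd j (fun y => ∑ i, S2ij v i j y * pd i v y) x
    _ = ∑ j, ∑ i, (pd j (S2ij v i j) x * pd i v x + S2ij v i j x * pd j (pd i v) x) := by
      refine sum_congr rfl fun j _ => ?_
      rw [pd_sum univ (fun i y => S2ij v i j y * pd i v y)
        fun i _ => (hv.differentiableAt_S2ij i j).mul (hd i)]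
      exact sum_congr rfl fun i _ => pd_mul (hv.differentiableAt_S2ij i j) (hd i)
    _ = ∑ i, (∑ j, pd j (S2ij v i j) x) * pd i v x + ∑ i, ∑ j, S2ij v i j x * pd j (pd i v) x := by
      rw [sum_comm]
      simp only [sum_add_distrib, sum_mul]
    _ = 2 * S2H v x := by
      simp only [sum_pd_S2ij_eq_zero hv, zero_mul, sum_const_zero, zero_add, sum_sum_S2ij_mul_pd_pd]

end Hessian

section Divergence

variable {n : ℕ} {v : (Fin n → ℝ) → ℝ} {x : Fin n → ℝ}

lemma sum_pd_rpow_mul_gradSq_mul_pd (γ : ℝ) (hv : ContDiffAt ℝ 2 v x) (hv0 : v x ≠ 0) :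
    ∑ j, pd j (fun y => γ / 2 * v y ^ (γ - 1) * gradSq v y * pd j v y) x
      = γ * (γ - 1) / 2 * v x ^ (γ - 2) * gradSq v x ^ 2
        + γ * v x ^ (γ - 1) * ∑ j, pd j v x * ∑ i, pd i v x * pd j (pd i v) x
        + γ / 2 * v x ^ (γ - 1) * gradSq v x * lap v x := by
  have hd0 := hv.differentiableAt two_ne_zero
  have hpow := hd0.rpow_const (p := γ - 1) (Or.inl hv0)
  have hterm : ∀ j, pd j (fun y => γ / 2 * v y ^ (γ - 1) * gradSq v y) x * pd j v x
      = γ * (γ - 1) / 2 * v x ^ (γ - 2) * gradSq v x * (pd j v x * pd j v x)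
        + γ * v x ^ (γ - 1) * (pd j v x * ∑ i, pd i v x * pd j (pd i v) x) := fun j => by
    rw [pd_mul (hpow.const_mul _) hv.differentiableAt_gradSq, pd_const_mul hpow, pd_rpow hd0 hv0,
      pd_gradSq hv, show γ - 1 - 1 = γ - 2 by ring]
    ring
  rw [sum_pd_mul (f := fun y => γ / 2 * v y ^ (γ - 1) * gradSq v y) (X := fun j => pd j v)
      ((hpow.const_mul _).mul hv.differentiableAt_gradSq) hv.differentiableAt_pd,
    sum_congr rfl fun j _ => hterm j, sum_add_distrib, ← mul_sum, ← mul_sum,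
    sum_pd_mul_pd_eq_gradSq, show ∑ j, pd j (pd j v) x = lap v x from rfl]
  ring

lemma sum_pd_rpow_mul_sum_S2ij_mul_pd (γ : ℝ) (hv : ContDiffAt ℝ 3 v x) (hv0 : v x ≠ 0) :
    ∑ j, pd j (fun y => v y ^ γ * ∑ i, S2ij v i j y * pd i v y) x
      = γ * v x ^ (γ - 1) * (lap v x * gradSq v x - ∑ j, pd j v x * ∑ i, pd i v x * pd j (pd i v) x)
        + v x ^ γ * (2 * S2H v x) := by
  have hd0 := (hv.of_le (by norm_num)).differentiableAt two_ne_zero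
  have hterm : ∀ j, pd j (fun y => v y ^ γ) x * ∑ i, S2ij v i j x * pd i v x
      = γ * v x ^ (γ - 1) * lap v x * (pd j v x * pd j v x)
        - γ * v x ^ (γ - 1) * (pd j v x * ∑ i, pd i v x * pd j (pd i v) x) := fun j => by
    rw [pd_rpow hd0 hv0, sum_S2ij_mul_pd]
    ring
  rw [sum_pd_mul (X := fun j y => ∑ i, S2ij v i j y * pd i v y) (hd0.rpow_const (Or.inl hv0))
      hv.differentiableAt_sum_S2ij_mul_pd,
    sum_pd_sum_S2ij_mul_pd hv, sum_congr rfl fun j _ => hterm j, sum_sub_distrib, ← mul_sum,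
    ← mul_sum, sum_pd_mul_pd_eq_gradSq]
  ring

end Divergence

theorem stmt_6_general (n : ℕ) (γ : ℝ) (U : Set (Fin n → ℝ)) (hU : IsOpen U)
    (v : (Fin n → ℝ) → ℝ) (hv : ContDiffOn ℝ 3 v U) (hpos : ∀ x ∈ U, 0 < v x)
    (x : Fin n → ℝ) (hx : x ∈ U) :
    2 * v x ^ γ * S2H v x
      = (∑ j, pd j (fun y =>
            (γ / 2) * v y ^ (γ - 1) * gradSq v y * pd j v y
              + v y ^ γ * ∑ i, S2ij v i j y * pd i v y) x)
        - (3 / 2) * γ * v x ^ (γ - 1) * gradSq v x * lap v x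
        - (γ * (γ - 1) / 2) * v x ^ (γ - 2) * (gradSq v x) ^ 2 := by
  have hvx : ContDiffAt ℝ 3 v x := (hv x hx).contDiffAt (hU.mem_nhds hx)
  have hv2 : ContDiffAt ℝ 2 v x := hvx.of_le (by norm_num)
  have hv0 : v x ≠ 0 := (hpos x hx).ne'
  have hpow (p : ℝ) : DifferentiableAt ℝ (fun y => v y ^ p) x :=
    (hv2.differentiableAt two_ne_zero).rpow_const (Or.inl hv0)
  have hA : ∀ j, DifferentiableAt ℝ (fun y => γ / 2 * v y ^ (γ - 1) * gradSq v y * pd j v y) x :=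
    fun j =>
      (((hpow _).const_mul _).mul hv2.differentiableAt_gradSq).mul (hv2.differentiableAt_pd j)
  have hB : ∀ j, DifferentiableAt ℝ (fun y => v y ^ γ * ∑ i, S2ij v i j y * pd i v y) x :=
    fun j => (hpow γ).mul (hvx.differentiableAt_sum_S2ij_mul_pd j)
  rw [sum_pd_add hA hB, sum_pd_rpow_mul_gradSq_mul_pd γ hv2 hv0,
    sum_pd_rpow_mul_sum_S2ij_mul_pd γ hvx hv0]
  ring

/-- Lemma 2.2 (identityC):
`2·v^γ·S₂(D²v) = div((γ/2)·v^{γ−1}·|Dv|²·Dv + v^γ·S²_{ij}(D²v)·∂ᵢv)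
  − (3/2)·γ·v^{γ−1}·|Dv|²·Δv − (γ(γ−1)/2)·v^{γ−2}·|Dv|⁴` on `U`. -/
theorem stmt_6 (n : ℕ) (hn : 1 ≤ n) (γ : ℝ) (U : Set (Fin n → ℝ)) (hU : IsOpen U)
    (v : (Fin n → ℝ) → ℝ) (hv : ContDiffOn ℝ 3 v U) (hpos : ∀ x ∈ U, 0 < v x)
    (x : Fin n → ℝ) (hx : x ∈ U) :
    2 * v x ^ γ * S2H v x
      = (∑ j, pd j (fun y =>
            (γ / 2) * v y ^ (γ - 1) * gradSq v y * pd j v y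
              + v y ^ γ * ∑ i, S2ij v i j y * pd i v y) x)
        - (3 / 2) * γ * v x ^ (γ - 1) * gradSq v x * lap v x
        - (γ * (γ - 1) / 2) * v x ^ (γ - 2) * (gradSq v x) ^ 2 :=
  stmt_6_general n γ U hU v hv hpos x hx
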